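/- arXiv:2504.14377 — 6 statements merged into one kernel-verified Lean document; each statement's English description precedes it below -/
import Mathlib

section
/- Let L > 0, α ≥ 0, and suppose two triples (x_1, f_1, g_1), (x_2, f_2, g_2) in R^d × R × R^d admit, for every z in R^d, values f_z in R and g_z in R^d such that for each i in {1,2}: (a) f_z ≥ f_i + ⟨g_i, z - x_i⟩ + (α/(2L))‖g_i - g_z‖², (b) f_i ≥ f_z + ⟨g_z, x_i - z⟩ + (α/(2L))‖g_i - g_z‖², and (c) ‖g_z - g_i‖² ≤ L²‖z - x_i‖². Then for all i, j in {1,2}: f_i ≥ f_j + ⟨g_j, x_i - x_j⟩ + ((1+α)/(4L))‖g_i - g_j‖² and ‖g_i - g_j‖ ≤ L‖x_i - x_j‖. -/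
open RealInnerProductSpace

theorem stmt2 (d : ℕ) (L α : ℝ) (hL : 0 < L) (hα : 0 ≤ α)
    (x g : Fin 2 → EuclideanSpace ℝ (Fin d)) (f : Fin 2 → ℝ)
    (h : ∀ z : EuclideanSpace ℝ (Fin d), ∃ (fz : ℝ) (gz : EuclideanSpace ℝ (Fin d)),
      ∀ i, fz ≥ f i + ⟪g i, z - x i⟫ + α / (2 * L) * ‖g i - gz‖ ^ 2 ∧
           f i ≥ fz + ⟪gz, x i - z⟫ + α / (2 * L) * ‖g i - gz‖ ^ 2 ∧
           ‖gz - g i‖ ^ 2 ≤ L ^ 2 * ‖z - x i‖ ^ 2) :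
    ∀ i j, f i ≥ f j + ⟪g j, x i - x j⟫ + (1 + α) / (4 * L) * ‖g i - g j‖ ^ 2 ∧
           ‖g i - g j‖ ≤ L * ‖x i - x j‖ := by
  intro i j
  constructor
  · -- use z = x i - (2L)⁻¹ • (g i - g j)
    set b : EuclideanSpace ℝ (Fin d) := g i - g j with hb
    obtain ⟨fz, gz, hz⟩ := h (x i - (2*L)⁻¹ • b)
    obtain ⟨-, hbi, hci⟩ := hz i
    obtain ⟨haj, -, -⟩ := hz j
    set a : EuclideanSpace ℝ (Fin d) := gz - g i with ha
    have hzxi : (x i - (2*L)⁻¹ • b) - x i = -((2*L)⁻¹ • b) := by abel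
    have hnorm : ‖(x i - (2*L)⁻¹ • b) - x i‖ = (2*L)⁻¹ * ‖b‖ := by
      rw [hzxi, norm_neg, norm_smul]
      simp [abs_of_pos, hL]
    have hc' : ‖a‖ ^ 2 ≤ ‖b‖ ^ 2 / 4 := by
      rw [hnorm] at hci
      have : L ^ 2 * ((2*L)⁻¹ * ‖b‖) ^ 2 = ‖b‖ ^ 2 / 4 := by
        field_simp; ring
      linarith [hci, this ▸ hci]
    have hA : (0:ℝ) ≤ ‖a‖ := norm_nonneg _
    have hB : (0:ℝ) ≤ ‖b‖ := norm_nonneg _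
    have hAB : ‖a‖ ≤ ‖b‖ / 2 := by nlinarith
    have hP : -(‖a‖ * ‖b‖) ≤ ⟪a, b⟫ := by
      have := abs_real_inner_le_norm a b
      have := abs_le.mp this
      linarith [this.1]
    -- rewrite inner products
    have hinner1 : ⟪gz, x i - (x i - (2*L)⁻¹ • b)⟫ = (2*L)⁻¹ * (⟪a, b⟫ + ‖b‖^2 + ⟪g j, b⟫) := by
      have : x i - (x i - (2*L)⁻¹ • b) = (2*L)⁻¹ • b := by abel
      rw [this, real_inner_smul_right]
      have : gz = a + b + g j := by rw [ha, hb]; abel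
      rw [this]
      rw [inner_add_left, inner_add_left, real_inner_self_eq_norm_sq]
    have hinner2 : ⟪g j, (x i - (2*L)⁻¹ • b) - x j⟫ = ⟪g j, x i - x j⟫ - (2*L)⁻¹ * ⟪g j, b⟫ := by
      have : (x i - (2*L)⁻¹ • b) - x j = (x i - x j) - (2*L)⁻¹ • b := by abel
      rw [this, inner_sub_right, real_inner_smul_right]
    have hgj : ‖g j - gz‖ ^ 2 = ‖a‖^2 + 2*⟪a,b⟫ + ‖b‖^2 := by
      have h1 : g j - gz = -(a + b) := by rw [ha, hb]; abel
      rw [h1, norm_neg]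
      rw [← real_inner_self_eq_norm_sq, inner_add_add_self, real_inner_self_eq_norm_sq,
        real_inner_self_eq_norm_sq, real_inner_comm b a]
      ring
    have hgi : ‖g i - gz‖ = ‖a‖ := by rw [ha, ← norm_neg]; congr 1; abel
    rw [hinner1, hgi] at hbi
    rw [hinner2, hgj] at haj
    have hiBj : ‖g i - g j‖ = ‖b‖ := rfl
    rw [hiBj]
    have hLpos : (0:ℝ) < 2 * L := by linarith
    set A := ‖a‖ with hA' 
    set B := ‖b‖ with hB'
    set P : ℝ := ⟪a, b⟫ with hP'
    set R : ℝ := ⟪g j, b⟫ with hR'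
    set T : ℝ := ⟪g j, x i - x j⟫ with hT'
    clear_value A B P R T
    clear hinner1 hinner2 hgj hgi hci hzxi hnorm hz h ha hb hiBj
    have key : (2*L)⁻¹ * (P + B^2) + α/(2*L) * (2*A^2 + 2*P + B^2)
        ≥ (1+α)/(4*L) * B^2 := by
      have e1 : P + B^2 ≥ B^2/2 := by nlinarith
      have e2 : 2*A^2 + 2*P + B^2 ≥ B^2/2 := by nlinarith [sq_nonneg (2*A - B)]
      have heq : (1+α)/(4*L) * B^2 = (2*L)⁻¹ * (B^2/2) + α/(2*L) * (B^2/2) := by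
        field_simp; ring
      have e3 : (2*L)⁻¹ * (B^2/2) ≤ (2*L)⁻¹ * (P + B^2) := by
        apply mul_le_mul_of_nonneg_left (by linarith) (by positivity)
      have e4 : α/(2*L) * (B^2/2) ≤ α/(2*L) * (2*A^2 + 2*P + B^2) := by
        apply mul_le_mul_of_nonneg_left (by linarith) (by positivity)
      linarith [heq, e3, e4]
    nlinarith [hbi, haj, key]
  · obtain ⟨fz, gz, hz⟩ := h (x i)
    have hi := (hz i).2.2
    have hj := (hz j).2.2
    simp only [sub_self, norm_zero] at hi
    have : gz = g i := by
      have h0 : ‖gz - g i‖ = 0 := by nlinarith [norm_nonneg (gz - g i)]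
      have := norm_sub_eq_zero_iff.mp h0
      exact this
    rw [this] at hj
    have h1 : ‖g i - g j‖ = ‖gz - g j‖ := by rw [this]
    have h2 : ‖g i - g j‖ ^ 2 ≤ (L * ‖x i - x j‖) ^ 2 := by
      calc ‖g i - g j‖ ^ 2 = ‖g i - g j‖^2 := rfl
        _ ≤ L^2 * ‖x i - x j‖^2 := hj
        _ = (L * ‖x i - x j‖)^2 := by ring
    exact le_of_pow_le_pow_left₀ two_ne_zero (mul_nonneg hL.le (norm_nonneg _)) h2
end

section
/- Let L > 0 and let S = {(x_i, t_i)}_{i=1}^N be points and values in R^d satisfying ‖t_i - t_j‖ ≤ L‖x_i - x_j‖ for all i, j. Then for any nonnegative reals λ_1, ..., λ_N with Σ_i λ_i = 1, setting z = Σ_i λ_i x_i and t_z = Σ_i λ_i t_i, it holds that Σ_i λ_i (‖t_z - t_i‖² - L²‖z - x_i‖²) = Σ_{i<j} λ_i λ_j (‖t_i - t_j‖² - L²‖x_i - x_j‖²) ≤ 0. -/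
open RealInnerProductSpace

lemma half_sum_aux {N : ℕ} (f : Fin N → Fin N → ℝ) (hsymm : ∀ i j, f i j = f j i)
    (hdiag : ∀ i, f i i = 0) :
    ∑ i, ∑ j, (if i < j then f i j else 0) = (∑ i, ∑ j, f i j) / 2 := by
  have key : (∑ i, ∑ j, f i j)
      = ∑ i, ∑ j, ((if i < j then f i j else 0) + (if j < i then f i j else 0)) := by
    refine Finset.sum_congr rfl fun i _ => Finset.sum_congr rfl fun j _ => ?_
    rcases lt_trichotomy i j with h | h | h
    · simp [h, not_lt_of_gt h]
    · simp [h, hdiag]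
    · simp [h, not_lt_of_gt h]
  have swap : (∑ i, ∑ j, (if j < i then f i j else 0))
      = ∑ i, ∑ j, (if i < j then f i j else 0) := by
    rw [Finset.sum_comm]
    exact Finset.sum_congr rfl fun i _ => Finset.sum_congr rfl fun j _ => by
      rw [hsymm]
  rw [key, Finset.sum_congr rfl fun i _ => Finset.sum_add_distrib, Finset.sum_add_distrib, swap]
  ring

lemma var_id {N : ℕ} {E : Type*} [NormedAddCommGroup E] [InnerProductSpace ℝ E]
    (y : Fin N → E) (lam : Fin N → ℝ) (hsum : ∑ i, lam i = 1) :
    ∑ i, lam i * ‖(∑ j, lam j • y j) - y i‖ ^ 2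
      = ∑ i, lam i * ‖y i‖ ^ 2 - ‖∑ j, lam j • y j‖ ^ 2 := by
  set z := ∑ j, lam j • y j with hz
  have hzz : ⟪z, z⟫ = ‖z‖ ^ 2 := real_inner_self_eq_norm_sq z
  have expand : ∀ i, ‖z - y i‖ ^ 2 = ‖z‖ ^ 2 - 2 * ⟪z, y i⟫ + ‖y i‖ ^ 2 := fun i =>
    norm_sub_sq_real z (y i)
  calc ∑ i, lam i * ‖z - y i‖ ^ 2
      = ∑ i, (lam i * ‖z‖ ^ 2 - 2 * (lam i * ⟪z, y i⟫) + lam i * ‖y i‖ ^ 2) := by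
        refine Finset.sum_congr rfl fun i _ => ?_
        rw [expand i]; ring
    _ = (∑ i, lam i) * ‖z‖ ^ 2 - 2 * (∑ i, lam i * ⟪z, y i⟫) + ∑ i, lam i * ‖y i‖ ^ 2 := by
        rw [Finset.sum_add_distrib, Finset.sum_sub_distrib, ← Finset.sum_mul,
          ← Finset.mul_sum]
    _ = ∑ i, lam i * ‖y i‖ ^ 2 - ‖z‖ ^ 2 := by
        have : (∑ i, lam i * ⟪z, y i⟫) = ⟪z, z⟫ := by
          rw [hz, inner_sum]
          exact Finset.sum_congr rfl fun i _ => by rw [real_inner_smul_right]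
        rw [this, hzz, hsum]; ring

lemma pair_id {N : ℕ} {E : Type*} [NormedAddCommGroup E] [InnerProductSpace ℝ E]
    (y : Fin N → E) (lam : Fin N → ℝ) (hsum : ∑ i, lam i = 1) :
    (∑ i, ∑ j, if i < j then lam i * lam j * ‖y i - y j‖ ^ 2 else 0)
      = ∑ i, lam i * ‖y i‖ ^ 2 - ‖∑ j, lam j • y j‖ ^ 2 := by
  set z := ∑ j, lam j • y j with hz
  have h1 := half_sum_aux (fun i j => lam i * lam j * ‖y i - y j‖ ^ 2)
    (fun i j => by beta_reduce; rw [norm_sub_rev]; ring) (fun i => by simp)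
  beta_reduce at h1
  rw [h1]
  have full : (∑ i, ∑ j, lam i * lam j * ‖y i - y j‖ ^ 2)
      = 2 * (∑ i, lam i * ‖y i‖ ^ 2 - ‖z‖ ^ 2) := by
    have expand : ∀ i j : Fin N, lam i * lam j * ‖y i - y j‖ ^ 2
        = lam j * (lam i * ‖y i‖ ^ 2) - 2 * (lam i * lam j * ⟪y i, y j⟫)
          + lam i * (lam j * ‖y j‖ ^ 2) := fun i j => by
      rw [norm_sub_sq_real]; ring
    have hzz : ⟪z, z⟫ = ‖z‖ ^ 2 := real_inner_self_eq_norm_sq z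
    have hinner : (∑ i, ∑ j, lam i * lam j * ⟪y i, y j⟫) = ‖z‖ ^ 2 := by
      rw [← hzz, hz, sum_inner]
      refine Finset.sum_congr rfl fun i _ => ?_
      rw [real_inner_smul_left, inner_sum, Finset.mul_sum]
      refine Finset.sum_congr rfl fun j _ => ?_
      rw [real_inner_smul_right]; ring
    calc (∑ i, ∑ j, lam i * lam j * ‖y i - y j‖ ^ 2)
        = ∑ i, ∑ j, (lam j * (lam i * ‖y i‖ ^ 2) - 2 * (lam i * lam j * ⟪y i, y j⟫)
            + lam i * (lam j * ‖y j‖ ^ 2)) := by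
          exact Finset.sum_congr rfl fun i _ => Finset.sum_congr rfl fun j _ => expand i j
      _ = ∑ i, ((∑ j, lam j) * (lam i * ‖y i‖ ^ 2)
            - 2 * (∑ j, lam i * lam j * ⟪y i, y j⟫)
            + lam i * (∑ j, lam j * ‖y j‖ ^ 2)) := by
          refine Finset.sum_congr rfl fun i _ => ?_
          rw [Finset.sum_add_distrib, Finset.sum_sub_distrib, ← Finset.sum_mul,
            ← Finset.mul_sum, ← Finset.mul_sum]
      _ = 2 * (∑ i, lam i * ‖y i‖ ^ 2 - ‖z‖ ^ 2) := by
          rw [Finset.sum_add_distrib, Finset.sum_sub_distrib, ← Finset.sum_mul,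
            ← Finset.mul_sum, ← Finset.mul_sum, hinner, hsum]
          ring
  rw [full]; ring

theorem stmt4 (d N : ℕ) (L : ℝ) (hL : 0 < L)
    (x t : Fin N → EuclideanSpace ℝ (Fin d))
    (hlip : ∀ i j, ‖t i - t j‖ ≤ L * ‖x i - x j‖)
    (lam : Fin N → ℝ) (hnn : ∀ i, 0 ≤ lam i) (hsum : ∑ i, lam i = 1) :
    (∑ i, lam i * (‖(∑ j, lam j • t j) - t i‖ ^ 2 - L ^ 2 * ‖(∑ j, lam j • x j) - x i‖ ^ 2))
      = (∑ i, ∑ j, if i < j then lam i * lam j * (‖t i - t j‖ ^ 2 - L ^ 2 * ‖x i - x j‖ ^ 2) else 0)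
    ∧ (∑ i, ∑ j, if i < j then lam i * lam j * (‖t i - t j‖ ^ 2 - L ^ 2 * ‖x i - x j‖ ^ 2) else 0) ≤ 0 := by
  constructor
  · have ht := var_id t lam hsum
    have hx := var_id x lam hsum
    have ht' := pair_id t lam hsum
    have hx' := pair_id x lam hsum
    have lhs : (∑ i, lam i * (‖(∑ j, lam j • t j) - t i‖ ^ 2
          - L ^ 2 * ‖(∑ j, lam j • x j) - x i‖ ^ 2))
        = (∑ i, lam i * ‖(∑ j, lam j • t j) - t i‖ ^ 2)
          - L ^ 2 * (∑ i, lam i * ‖(∑ j, lam j • x j) - x i‖ ^ 2) := by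
      rw [Finset.mul_sum, ← Finset.sum_sub_distrib]
      exact Finset.sum_congr rfl fun i _ => by ring
    have rhs : (∑ i, ∑ j, if i < j then lam i * lam j
          * (‖t i - t j‖ ^ 2 - L ^ 2 * ‖x i - x j‖ ^ 2) else 0)
        = (∑ i, ∑ j, if i < j then lam i * lam j * ‖t i - t j‖ ^ 2 else 0)
          - L ^ 2 * (∑ i, ∑ j, if i < j then lam i * lam j * ‖x i - x j‖ ^ 2 else 0) := by
      rw [Finset.mul_sum, ← Finset.sum_sub_distrib]
      refine Finset.sum_congr rfl fun i _ => ?_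
      rw [Finset.mul_sum, ← Finset.sum_sub_distrib]
      refine Finset.sum_congr rfl fun j _ => ?_
      split <;> ring
    rw [lhs, rhs, ht, hx, ht', hx']
  · refine Finset.sum_nonpos fun i _ => Finset.sum_nonpos fun j _ => ?_
    split
    · have h1 : ‖t i - t j‖ ^ 2 ≤ L ^ 2 * ‖x i - x j‖ ^ 2 := by
        have := hlip i j
        have h2 : ‖t i - t j‖ ^ 2 ≤ (L * ‖x i - x j‖) ^ 2 :=
          pow_le_pow_left₀ (norm_nonneg _) this 2
        calc ‖t i - t j‖ ^ 2 ≤ (L * ‖x i - x j‖) ^ 2 := h2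
          _ = L ^ 2 * ‖x i - x j‖ ^ 2 := by ring
      have := mul_nonneg (hnn i) (hnn j)
      nlinarith
    · rfl
end

section
/- For any real q ≥ 2 and vectors u, v in R^d with ⟨u, v⟩ ≤ 0, it holds that ‖u - v‖^q ≥ ‖u‖^q + ‖v‖^q - q⟨u, v⟩‖u‖^{q-2}. -/
/-!
Put `p = q / 2`, `a = ‖u‖²`, `b = ‖v‖²` and `c = -2⟪u, v⟫ ≥ 0`, so that `‖u - v‖² = a + b + c`.
Since `t ↦ t ^ p` is convex and superadditive on `[0, ∞)` for `p ≥ 1`,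
`(a + b + c) ^ p ≥ (a + c) ^ p + b ^ p ≥ a ^ p + p c a ^ (p - 1) + b ^ p`,
which is the claim after taking the `p`-th powers of the squared norms.
-/

open RealInnerProductSpace

namespace Real

lemma rpow_add_mul_rpow_sub_one_le_add_rpow {x s p : ℝ} (hx : 0 ≤ x) (hs : 0 ≤ s) (hp : 1 ≤ p) :
    x ^ p + p * s * x ^ (p - 1) ≤ (x + s) ^ p := by
  rcases hx.eq_or_lt with rfl | hx
  · rcases hp.eq_or_lt with rfl | hp
    · simp
    · simp [zero_rpow (by linarith : p ≠ 0), zero_rpow (sub_ne_zero.2 hp.ne'), rpow_nonneg hs]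
  have hsx : 0 ≤ s / x := div_nonneg hs hx.le
  calc x ^ p + p * s * x ^ (p - 1) = x ^ p * (1 + p * (s / x)) := by
        rw [rpow_sub hx, rpow_one]; field_simp
    _ ≤ x ^ p * (1 + s / x) ^ p := by
        gcongr; exact one_add_mul_self_le_rpow_one_add (by linarith) hp
    _ = (x + s) ^ p := by
        rw [← mul_rpow hx.le (by linarith)]; congr 1; field_simp

lemma rpow_add_rpow_add_mul_rpow_sub_one_le {a b c p : ℝ} (ha : 0 ≤ a) (hb : 0 ≤ b)
    (hc : 0 ≤ c) (hp : 1 ≤ p) :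
    a ^ p + b ^ p + p * c * a ^ (p - 1) ≤ (a + b + c) ^ p :=
  calc a ^ p + b ^ p + p * c * a ^ (p - 1) = (a ^ p + p * c * a ^ (p - 1)) + b ^ p := by ring
    _ ≤ (a + c) ^ p + b ^ p := by gcongr; exact rpow_add_mul_rpow_sub_one_le_add_rpow ha hc hp
    _ ≤ (a + c + b) ^ p := add_rpow_le_rpow_add (by positivity) hb hp
    _ = (a + b + c) ^ p := by ring_nf

lemma sq_rpow_div_two {x : ℝ} (hx : 0 ≤ x) (r : ℝ) : (x ^ 2) ^ (r / 2) = x ^ r := by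
  rw [← rpow_natCast_mul hx, Nat.cast_ofNat, mul_div_cancel₀ r two_ne_zero]

end Real

theorem norm_sub_rpow_ge_of_inner_nonpos {E : Type*} [NormedAddCommGroup E]
    [InnerProductSpace ℝ E] {q : ℝ} (hq : 2 ≤ q) {u v : E} (huv : ⟪u, v⟫ ≤ 0) :
    ‖u‖ ^ q + ‖v‖ ^ q - q * ⟪u, v⟫ * ‖u‖ ^ (q - 2) ≤ ‖u - v‖ ^ q := by
  have key := Real.rpow_add_rpow_add_mul_rpow_sub_one_le (sq_nonneg ‖u‖) (sq_nonneg ‖v‖)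
    (by linarith : 0 ≤ -2 * ⟪u, v⟫) (by linarith : 1 ≤ q / 2)
  rw [show q / 2 - 1 = (q - 2) / 2 by ring,
    show ‖u‖ ^ 2 + ‖v‖ ^ 2 + -2 * ⟪u, v⟫ = ‖u - v‖ ^ 2 by rw [norm_sub_sq_real]; ring] at key
  simp only [Real.sq_rpow_div_two (norm_nonneg _)] at key
  linarith

theorem stmt6 (d : ℕ) (q : ℝ) (hq : 2 ≤ q) (u v : EuclideanSpace ℝ (Fin d))
    (huv : ⟪u, v⟫ ≤ 0) :
    ‖u - v‖ ^ q ≥ ‖u‖ ^ q + ‖v‖ ^ q - q * ⟪u, v⟫ * ‖u‖ ^ (q - 2) :=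
  norm_sub_rpow_ge_of_inner_nonpos hq huv
end

section
/- For q ≥ 2 and nonnegative reals a, b and real c ≤ 0 with a² + b² > 0, one has (a² + b² - 2c)^{q/2} ≥ a^q + b^q - q c (a² + b²)^{q/2 - 1}. -/
/-!
Put `s = a² + b²`. Superadditivity of `x ↦ x ^ (q/2)` on `[0, ∞)` gives
`a ^ q + b ^ q ≤ s ^ (q/2)`, and Bernoulli's inequality `(1 + t/s) ^ (q/2) ≥ 1 + (q/2) t/s`
with `t = -2c ≥ 0` gives `s ^ (q/2) - q c s ^ (q/2 - 1) ≤ (s - 2c) ^ (q/2)`.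
-/

namespace Real

theorem rpow_add_mul_rpow_sub_one_le {s t p : ℝ} (hs : 0 < s) (ht : -s ≤ t) (hp : 1 ≤ p) :
    s ^ p + p * t * s ^ (p - 1) ≤ (s + t) ^ p := by
  have hts : -1 ≤ t / s := by rwa [le_div_iff₀ hs, neg_one_mul]
  have hbernoulli : 1 + p * (t / s) ≤ (1 + t / s) ^ p := one_add_mul_self_le_rpow_one_add hts hp
  have hfactor : (s + t) ^ p = s ^ p * (1 + t / s) ^ p := by
    rw [← mul_rpow hs.le (by linarith), mul_add, mul_one, mul_div_cancel₀ _ hs.ne']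
  calc s ^ p + p * t * s ^ (p - 1) = s ^ p * (1 + p * (t / s)) := by
        rw [rpow_sub_one hs.ne']
        field_simp
    _ ≤ (s + t) ^ p := hfactor ▸ mul_le_mul_of_nonneg_left hbernoulli (by positivity)

theorem rpow_add_rpow_le_sq_add_sq_rpow_half {a b q : ℝ} (ha : 0 ≤ a) (hb : 0 ≤ b)
    (hq : 2 ≤ q) : a ^ q + b ^ q ≤ (a ^ 2 + b ^ 2) ^ (q / 2) := by
  have hsq {x : ℝ} (hx : 0 ≤ x) : (x ^ 2) ^ (q / 2) = x ^ q := by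
    rw [← rpow_natCast_mul hx, Nat.cast_ofNat, mul_div_cancel₀ q two_ne_zero]
  rw [← hsq ha, ← hsq hb]
  exact add_rpow_le_rpow_add (sq_nonneg a) (sq_nonneg b) (by linarith)

end Real

theorem stmt7 (q a b c : ℝ) (hq : 2 ≤ q) (ha : 0 ≤ a) (hb : 0 ≤ b) (hc : c ≤ 0)
    (hab : 0 < a ^ 2 + b ^ 2) :
    (a ^ 2 + b ^ 2 - 2 * c) ^ (q / 2) ≥ a ^ q + b ^ q - q * c * (a ^ 2 + b ^ 2) ^ (q / 2 - 1) := by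
  set s := a ^ 2 + b ^ 2
  have hbernoulli := Real.rpow_add_mul_rpow_sub_one_le hab (t := -(2 * c)) (p := q / 2)
    (by linarith) (by linarith)
  calc a ^ q + b ^ q - q * c * s ^ (q / 2 - 1)
      ≤ s ^ (q / 2) + q / 2 * -(2 * c) * s ^ (q / 2 - 1) := by
        linarith [Real.rpow_add_rpow_le_sq_add_sq_rpow_half ha hb hq]
    _ ≤ (s - 2 * c) ^ (q / 2) := by rwa [← sub_eq_add_neg] at hbernoulli
end

section
/- Let P(λ) = (1-λ)A + λC + λ(1-λ)B be a real quadratic polynomial in λ. Then P(λ) ≤ 0 for all λ in [0,1] if and only if there exist a positive semidefinite 2×2 real symmetric matrix M = [[M11, M12],[M12, M22]] and a real K ≥ 0 such that M11 = -A, 2M12 + K = A - C - B, and M22 - K = B (equivalently P(λ) = -(1, λ) M (1, λ)^T - λ(1-λ)K). -/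
/-!
Evaluating at λ = 0 and λ = 1 gives a := -A ≥ 0 and c := -C ≥ 0, and evaluating at the vertex
of the parabola λ(1-λ)B - (1-λ)a - λc shows B ≤ (√a + √c)². Hence K := (√a + √c)² - B ≥ 0, and
the rank-one matrix v vᵀ with v = (√a, -(√a + √c)) meets the linear constraints. Conversely,
the constraints say exactly P(λ) = -(1, λ) M (1, λ)ᵀ - λ(1-λ)K, which is ≤ 0 on [0, 1].
-/

open Matrix

lemma posSemidef_fin_two_outer (u v : ℝ) :
    (!![u * u, u * v; u * v, v * v] : Matrix (Fin 2) (Fin 2) ℝ).PosSemidef := by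
  convert posSemidef_vecMulVec_self_star ![u, v] using 1
  ext i j
  fin_cases i <;> fin_cases j <;> simp [vecMulVec, mul_comm]

lemma dotProduct_mulVec_fin_two (p q r x y : ℝ) :
    ![x, y] ⬝ᵥ (!![p, q; q, r] *ᵥ ![x, y]) = p * x ^ 2 + 2 * q * x * y + r * y ^ 2 := by
  simp [dotProduct, mulVec, Fin.sum_univ_two]
  ring

lemma le_sq_sqrt_add_sqrt_of_forall_Icc {a b c : ℝ}
    (h : ∀ t ∈ Set.Icc (0 : ℝ) 1, t * (1 - t) * b ≤ (1 - t) * a + t * c) :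
    b ≤ (√a + √c) ^ 2 := by
  have ha : 0 ≤ a := by simpa using h 0 (by simp)
  have hc : 0 ≤ c := by simpa using h 1 (by simp)
  have hroots : (2 * (√a * √c)) ^ 2 = 4 * a * c := by
    rw [mul_pow, mul_pow, Real.sq_sqrt ha, Real.sq_sqrt hc]; ring
  rw [add_sq, Real.sq_sqrt ha, Real.sq_sqrt hc]
  rcases le_or_gt b (a + c) with hb | hb
  · nlinarith [Real.sqrt_nonneg a, Real.sqrt_nonneg c]
  -- evaluate at the vertex of the parabola, which lies in [0, 1] since b > |a - c|
  set t := (b + a - c) / (2 * b) with ht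
  have hvertex : 2 * b * t = b + a - c := by
    rw [ht]; field_simp [show b ≠ 0 by linarith]
  have htI : t ∈ Set.Icc (0 : ℝ) 1 := by
    rw [ht]; constructor
    · apply div_nonneg <;> linarith
    · rw [div_le_one (by linarith)]; linarith
  have hdisc : (b - a - c) ^ 2 ≤ (2 * (√a * √c)) ^ 2 := by
    have hcompl : 4 * b * ((1 - t) * a + t * c - t * (1 - t) * b)
        = (2 * b * t - (b + a - c)) ^ 2 + 4 * a * c - (b - a - c) ^ 2 := by ring
    rw [hvertex, sub_self] at hcompl
    rw [hroots]
    nlinarith [h t htI]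
  have := (pow_le_pow_iff_left₀ (by linarith) (by positivity) two_ne_zero).1 hdisc
  linarith

theorem stmt11 (A B C : ℝ) :
    (∀ lam ∈ Set.Icc (0 : ℝ) 1, (1 - lam) * A + lam * C + lam * (1 - lam) * B ≤ 0) ↔
    ∃ (M11 M12 M22 K : ℝ), (!![M11, M12; M12, M22] : Matrix (Fin 2) (Fin 2) ℝ).PosSemidef ∧
      0 ≤ K ∧ M11 = -A ∧ 2 * M12 + K = A - C - B ∧ M22 - K = B := by
  constructor
  · intro h
    have hB := le_sq_sqrt_add_sqrt_of_forall_Icc (a := -A) (b := B) (c := -C)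
      fun t ht => by linarith [h t ht]
    have hA : 0 ≤ -A := by simpa using h 0 (by simp)
    have hC : 0 ≤ -C := by simpa using h 1 (by simp)
    set s := √(-A) + √(-C)
    have hM11 : √(-A) * √(-A) = -A := Real.mul_self_sqrt hA
    refine ⟨-A, -(√(-A) * s), s ^ 2, s ^ 2 - B, ?_, sub_nonneg.2 hB, rfl, ?_, by ring⟩
    · simpa [hM11, sq] using posSemidef_fin_two_outer (√(-A)) (-s)
    · linear_combination Real.mul_self_sqrt hC - hM11
  · rintro ⟨M11, M12, M22, K, hM, hK, h11, h12, h22⟩ lam ⟨hlam0, hlam1⟩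
    have hform := hM.dotProduct_mulVec_nonneg ![1, lam]
    rw [star_trivial, dotProduct_mulVec_fin_two] at hform
    have hK' : 0 ≤ lam * (1 - lam) * K := by
      have := sub_nonneg.2 hlam1; positivity
    linear_combination hform + hK' + h11 + lam * h12 + lam ^ 2 * h22
end

section
/- In R² with μ = 0 and L = 1, the dataset (x_1, t_1) = ((0,0),(0,0)), (x_2, t_2) = ((1,0),(0,0)), (x_3, t_3) = ((1/2,0),(0,-1/2)) satisfies ⟨t_i - t_j, x_i - x_j⟩ ≥ 0 and ‖t_i - t_j‖ ≤ ‖x_i - x_j‖ for all i, j in {1,2,3}, yet there exists no monotone 1-Lipschitz operator T : R² → R² with T(x_i) = t_i for i = 1, 2, 3. -/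
/-!
The level sets of a continuous monotone operator are convex. If `T x = T y = c` and `p` is a
convex combination of `x` and `y`, monotonicity at `x` and at `y` combines into
`0 ≤ ⟪T z - c, z - p⟫` for every `z`; putting `z = p + s • w` and letting `s → 0⁺` gives
`0 ≤ ⟪T p - c, w⟫` for every direction `w` (Minty's trick), so `T p = c`.
Here `x₃` is the midpoint of `x₁` and `x₂`, on which `T` vanishes, so `T x₃ = 0 ≠ t₃`.
-/

open RealInnerProductSpace

/-- Build a vector of `EuclideanSpace ℝ (Fin 2)` from two coordinates. -/
noncomputable def e2 (a b : ℝ) : EuclideanSpace ℝ (Fin 2) :=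
  (WithLp.equiv 2 (Fin 2 → ℝ)).symm ![a, b]

open Filter Topology

section MonotoneOperator

variable {E : Type*} [NormedAddCommGroup E] [InnerProductSpace ℝ E] {T : E → E}

lemma inner_apply_sub_sub_smul_add_smul_nonneg (hT : ∀ x y, 0 ≤ ⟪T x - T y, x - y⟫)
    {c x y : E} (hx : T x = c) (hy : T y = c) {a b : ℝ} (ha : 0 ≤ a) (hb : 0 ≤ b)
    (hab : a + b = 1) (z : E) :
    0 ≤ ⟪T z - c, z - (a • x + b • y)⟫ := by
  have hsplit : z - (a • x + b • y) = a • (z - x) + b • (z - y) := by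
    linear_combination (norm := module) (-hab) • z
  have hzx := hT z x
  have hzy := hT z y
  rw [hx] at hzx
  rw [hy] at hzy
  rw [hsplit, inner_add_right, real_inner_smul_right, real_inner_smul_right]
  exact add_nonneg (mul_nonneg ha hzx) (mul_nonneg hb hzy)

lemma eq_of_forall_inner_apply_sub_sub_nonneg {p c : E} (hT : ContinuousAt T p)
    (h : ∀ z, 0 ≤ ⟪T z - c, z - p⟫) : T p = c := by
  have hdir : ∀ w, 0 ≤ ⟪T p - c, w⟫ := by
    intro w
    have hline : Tendsto (fun s : ℝ => p + s • w) (𝓝[>] 0) (𝓝 p) := by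
      have : Continuous (fun s : ℝ => p + s • w) := by fun_prop
      simpa using (this.tendsto 0).mono_left nhdsWithin_le_nhds
    have hlim : Tendsto (fun s : ℝ => ⟪T (p + s • w) - c, w⟫) (𝓝[>] 0) (𝓝 ⟪T p - c, w⟫) :=
      ((hT.tendsto.comp hline).sub_const c).inner tendsto_const_nhds
    refine ge_of_tendsto hlim (eventually_nhdsWithin_of_forall fun s (hs : 0 < s) => ?_)
    have hs' := h (p + s • w)
    rw [add_sub_cancel_left, real_inner_smul_right] at hs'
    exact nonneg_of_mul_nonneg_right (by linarith) hs
  have hneg := hdir (-(T p - c))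
  rw [inner_neg_right, real_inner_self_eq_norm_sq, neg_nonneg] at hneg
  exact sub_eq_zero.mp (norm_eq_zero.mp (by nlinarith [norm_nonneg (T p - c)]))

theorem convex_preimage_singleton_of_monotone (hT : ∀ x y, 0 ≤ ⟪T x - T y, x - y⟫)
    (hc : Continuous T) (c : E) : Convex ℝ (T ⁻¹' {c}) :=
  fun _ hx _ hy _ _ ha hb hab => eq_of_forall_inner_apply_sub_sub_nonneg hc.continuousAt
    (inner_apply_sub_sub_smul_add_smul_nonneg hT hx hy ha hb hab)

end MonotoneOperator

section Coordinates

lemma e2_inj {a b c d : ℝ} : e2 a b = e2 c d ↔ a = c ∧ b = d := by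
  refine ⟨fun h => ⟨congrArg (· 0) h, congrArg (· 1) h⟩, ?_⟩
  rintro ⟨rfl, rfl⟩
  rfl

lemma e2_sub_e2 (a b c d : ℝ) : e2 a b - e2 c d = e2 (a - c) (b - d) := by
  ext i; fin_cases i <;> simp [e2]

lemma smul_e2_add_smul_e2 (r s a b c d : ℝ) :
    r • e2 a b + s • e2 c d = e2 (r * a + s * c) (r * b + s * d) := by
  ext i; fin_cases i <;> simp [e2]

lemma inner_e2_e2 (a b c d : ℝ) : ⟪e2 a b, e2 c d⟫ = a * c + b * d := by
  simp [e2, PiLp.inner_apply, Fin.sum_univ_two]; ring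

lemma norm_e2_le_norm_e2 {a b c d : ℝ} (h : a ^ 2 + b ^ 2 ≤ c ^ 2 + d ^ 2) :
    ‖e2 a b‖ ≤ ‖e2 c d‖ := by
  simp only [e2, EuclideanSpace.norm_eq, Fin.sum_univ_two]
  simpa using Real.sqrt_le_sqrt h

end Coordinates

theorem stmt13 (x t : Fin 3 → EuclideanSpace ℝ (Fin 2))
    (hx : x = ![e2 0 0, e2 1 0, e2 (1 / 2) 0])
    (ht : t = ![e2 0 0, e2 0 0, e2 0 (-1 / 2)]) :
    (∀ i j : Fin 3, 0 ≤ ⟪t i - t j, x i - x j⟫ ∧ ‖t i - t j‖ ≤ ‖x i - x j‖) ∧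
    ¬ ∃ T : EuclideanSpace ℝ (Fin 2) → EuclideanSpace ℝ (Fin 2),
        (∀ a b, 0 ≤ ⟪T a - T b, a - b⟫) ∧ (∀ a b, ‖T a - T b‖ ≤ ‖a - b‖) ∧
        (∀ i, T (x i) = t i) := by
  subst hx ht
  refine ⟨fun i j => ?_, ?_⟩
  · fin_cases i <;> fin_cases j <;>
      simp only [Fin.zero_eta, Fin.mk_one, Fin.reduceFinMk, Matrix.cons_val, Matrix.cons_val_zero,
        Matrix.cons_val_one, e2_sub_e2] <;>
      exact ⟨by rw [inner_e2_e2]; norm_num, norm_e2_le_norm_e2 (by norm_num)⟩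
  · rintro ⟨T, hmono, hlip, hinterp⟩
    have hcont : Continuous T :=
      (LipschitzWith.of_dist_le_mul (K := 1) fun a b => by
        simpa [dist_eq_norm] using hlip a b).continuous
    have hmid : e2 (1 / 2) 0 = (1 / 2 : ℝ) • e2 0 0 + (1 / 2 : ℝ) • e2 1 0 := by
      rw [smul_e2_add_smul_e2]; norm_num
    have hT0 : T (e2 0 0) = e2 0 0 := hinterp 0
    have hT1 : T (e2 1 0) = e2 0 0 := hinterp 1
    have hT2 : T (e2 (1 / 2) 0) = e2 0 (-1 / 2) := hinterp 2
    have hT2' : T (e2 (1 / 2) 0) = e2 0 0 := by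
      rw [hmid]
      exact convex_preimage_singleton_of_monotone hmono hcont _ hT0 hT1
        (by norm_num) (by norm_num) (by norm_num)
    have hcontra : e2 0 (-1 / 2) = e2 0 0 := hT2.symm.trans hT2'
    norm_num [e2_inj] at hcontra
end
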